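/- Suppose the Fréchet derivative f' is uniformly continuous on C, the stepsizes (γ_k) are chosen by line minimization for φ = f + g, and for some σ ∈ (1,2] the constant C > 0 is a finite curvature constant of order σ of f over C (i.e., f(x + γ(s−x)) ≤ f(x) + ⟨f'(x), γ(s−x)⟩ + (γ^σ/σ)·C for all x, s ∈ C, γ ∈ (0,1]). Then the sequence (x_k) generated by the generalized Frank–Wolfe algorithm satisfies, for all k ≥ 1, φ(x_k) − φ* ≤ θ_0 / (1 + (1/σ)·θ_0^{1/(σ−1)}·C^{1/(1−σ)}·k)^{σ−1}, where θ_0 = φ(x_0) − φ*; in particular φ(x_k) − φ* = O(1/k^{σ−1}). -/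

import Mathlib

/-!
Write `θₖ = φ(xₖ) - φ*`. Comparing the line-minimizing step with the step of length `u`, and
using the curvature bound for `f`, convexity of `g`, the gradient inequality for `f` and the
optimality of `x̄ₖ`, gives `θₖ₊₁ ≤ (1 - u) θₖ + u^σ/σ · Cf` for every `u ∈ (0,1]`. If
`θₖ ≤ Cf s^(σ-1)`, the choice `u = s` (or `u = 1` when `s > 1`) together with Bernoulli's
inequality for the exponent `σ - 1 ≤ 1` yields `θₖ₊₁ ≤ Cf (s / (1 + s/σ))^(σ-1)`. Starting from
`s₀ = (θ₀/Cf)^(1/(σ-1))`, the map `s ↦ s / (1 + s/σ)` gives `sₖ = s₀ / (1 + s₀ k/σ)`, which is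
the claimed bound.
-/

open Set

theorem ConvexOn.add_apply_sub_le_of_hasFDerivAt {X : Type*} [NormedAddCommGroup X]
    [NormedSpace ℝ X] {s : Set X} {f : X → ℝ} {f' : X →L[ℝ] ℝ} {x y : X}
    (hf : ConvexOn ℝ s f) (hx : x ∈ s) (hy : y ∈ s) (hf' : HasFDerivAt f f' x) :
    f x + f' (y - x) ≤ f y := by
  set ℓ : ℝ →ᵃ[ℝ] X := AffineMap.lineMap x y
  have hderiv : HasDerivAt (f ∘ ℓ) (f' (y - x)) 0 := by
    have : HasFDerivAt f f' (ℓ 0) := by simpa [ℓ] using hf'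
    exact this.comp_hasDerivAt 0 AffineMap.hasDerivAt_lineMap
  have := (hf.comp_affineMap ℓ).le_slope_of_hasDerivAt (by simpa [ℓ] using hx)
    (by simpa [ℓ] using hy) one_pos hderiv
  simp only [slope_def_field, Function.comp_apply, AffineMap.lineMap_apply_one,
    AffineMap.lineMap_apply_zero, sub_zero, div_one, ℓ] at this
  linarith

def IsDescentStep (σ Cf θ θ' : ℝ) : Prop :=
  ∀ u ∈ Ioc (0 : ℝ) 1, θ' ≤ (1 - u) * θ + u ^ σ / σ * Cf

theorem IsDescentStep.le_mul_rpow {σ Cf s θ θ' : ℝ} (hθ' : IsDescentStep σ Cf θ θ')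
    (hσ1 : 1 < σ) (hσ2 : σ ≤ 2) (hCf : 0 ≤ Cf) (hs : 0 < s) (hθ : θ ≤ Cf * s ^ (σ - 1)) :
    θ' ≤ Cf * (s / (1 + s / σ)) ^ (σ - 1) := by
  have hσ0 : 0 < σ := by linarith
  have hbernoulli : ∀ a : ℝ, 0 ≤ a → (1 + a) ^ (σ - 1) ≤ 1 + (σ - 1) * a := fun a ha =>
    rpow_one_add_le_one_add_mul_self (by linarith) (by linarith) (by linarith)
  have hP : 0 ≤ (1 + s / σ) ^ (σ - 1) := by positivity
  have hq : 0 ≤ Cf * s ^ (σ - 1) := by positivity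
  rw [Real.div_rpow hs.le (by positivity), mul_div_assoc', le_div_iff₀ (by positivity)]
  rcases le_or_gt s 1 with hs1 | hs1
  · set w := (σ - 1) * (s / σ)
    have hw : w ≤ 1 := by
      rw [show w = (σ - 1) / σ * s by ring]
      nlinarith [div_le_one_of_le₀ (by linarith : σ - 1 ≤ σ) hσ0.le]
    have hθ'w : θ' ≤ Cf * s ^ (σ - 1) * (1 - w) := by
      have hpow : s ^ σ = s ^ (σ - 1) * s := by
        rw [← Real.rpow_add_one hs.ne', sub_add_cancel]
      calc θ' ≤ (1 - s) * θ + s ^ σ / σ * Cf := hθ' s ⟨hs, hs1⟩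
        _ ≤ (1 - s) * (Cf * s ^ (σ - 1)) + s ^ σ / σ * Cf := by gcongr
        _ = Cf * s ^ (σ - 1) * (1 - w) := by rw [hpow]; simp only [w]; field_simp; ring
    nlinarith [mul_le_mul_of_nonneg_right hθ'w hP,
      mul_le_mul_of_nonneg_left (hbernoulli (s / σ) (by positivity))
        (mul_nonneg hq (sub_nonneg.2 hw)), mul_nonneg hq (sq_nonneg w)]
  · have hθ'1 : θ' ≤ 1 / σ * Cf := by
      have := hθ' 1 ⟨one_pos, le_rfl⟩
      rwa [Real.one_rpow, sub_self, zero_mul, zero_add] at this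
    have hPs : (1 + s / σ) ^ (σ - 1) ≤ s ^ (σ - 1) * (1 + (σ - 1) * (1 / σ)) := by
      calc (1 + s / σ) ^ (σ - 1) ≤ (s * (1 + 1 / σ)) ^ (σ - 1) := by
            gcongr; rw [mul_one_add, mul_one_div]; linarith
        _ = s ^ (σ - 1) * (1 + 1 / σ) ^ (σ - 1) := Real.mul_rpow hs.le (by positivity)
        _ ≤ s ^ (σ - 1) * (1 + (σ - 1) * (1 / σ)) := by
            gcongr; exact hbernoulli _ (by positivity)
    have hcoef : 1 / σ * (1 + (σ - 1) * (1 / σ)) ≤ 1 := by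
      field_simp
      nlinarith
    calc θ' * (1 + s / σ) ^ (σ - 1) ≤ 1 / σ * Cf * (s ^ (σ - 1) * (1 + (σ - 1) * (1 / σ))) := by
          gcongr
      _ = Cf * s ^ (σ - 1) * (1 / σ * (1 + (σ - 1) * (1 / σ))) := by ring
      _ ≤ Cf * s ^ (σ - 1) := mul_le_of_le_one_right hq hcoef

theorem le_mul_rpow_of_isDescentStep {σ Cf t : ℝ} {θ : ℕ → ℝ} (hσ1 : 1 < σ) (hσ2 : σ ≤ 2)
    (hCf : 0 ≤ Cf) (ht : 0 < t) (hθ0 : θ 0 ≤ Cf * t ^ (σ - 1))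
    (hθ : ∀ k, IsDescentStep σ Cf (θ k) (θ (k + 1))) (k : ℕ) :
    θ k ≤ Cf * (t / (1 + t / σ * k)) ^ (σ - 1) := by
  induction k with
  | zero => simpa using hθ0
  | succ n ih =>
    convert (hθ n).le_mul_rpow hσ1 hσ2 hCf (by positivity) ih using 3
    field_simp
    push_cast
    ring

theorem le_div_rpow_of_isDescentStep {σ Cf : ℝ} {θ : ℕ → ℝ} (hσ1 : 1 < σ) (hσ2 : σ ≤ 2)
    (hCf : 0 < Cf) (hθ0 : 0 ≤ θ 0) (hanti : Antitone θ)
    (hθ : ∀ k, IsDescentStep σ Cf (θ k) (θ (k + 1))) (k : ℕ) :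
    θ k ≤ θ 0 / (1 + 1 / σ * θ 0 ^ (1 / (σ - 1)) * Cf ^ (1 / (1 - σ)) * k) ^ (σ - 1) := by
  rcases hθ0.eq_or_lt with h0 | h0
  · rw [← h0, Real.zero_rpow (one_div_ne_zero (by linarith))]
    simpa [← h0] using hanti (Nat.zero_le k)
  set t := θ 0 ^ (1 / (σ - 1)) * Cf ^ (1 / (1 - σ))
  have ht : t ^ (σ - 1) = θ 0 / Cf := by
    have hσ : σ - 1 ≠ 0 := by linarith
    have hσ' : 1 - σ ≠ 0 := by linarith
    rw [Real.mul_rpow (by positivity) (by positivity), ← Real.rpow_mul h0.le,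
      ← Real.rpow_mul hCf.le, one_div_mul_cancel hσ,
      show 1 / (1 - σ) * (σ - 1) = -1 by field_simp; ring, Real.rpow_one, Real.rpow_neg_one,
      div_eq_mul_inv]
  calc θ k ≤ Cf * (t / (1 + t / σ * k)) ^ (σ - 1) :=
        le_mul_rpow_of_isDescentStep hσ1 hσ2 hCf.le (by positivity)
          (by rw [ht, mul_div_cancel₀ _ hCf.ne']) hθ k
    _ = θ 0 / (1 + 1 / σ * t * k) ^ (σ - 1) := by
        rw [Real.div_rpow (by positivity) (by positivity), ht]
        field_simp
    _ = _ := by simp only [t, mul_assoc]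

section FrankWolfe

variable {X : Type*} [NormedAddCommGroup X] [NormedSpace ℝ X] {C : Set X} {f G : X → ℝ}
  {f' : X → X →L[ℝ] ℝ} {σ Cf : ℝ}

theorem Convex.frankWolfe_mem (hC : Convex ℝ C) {x xbar : ℕ → X} {γ : ℕ → ℝ}
    (hx0 : x 0 ∈ C) (hxbar : ∀ k, xbar k ∈ C) (hγ : ∀ k, γ k ∈ Icc (0 : ℝ) 1)
    (hupdate : ∀ k, x (k + 1) = x k + γ k • (xbar k - x k)) (k : ℕ) : x k ∈ C := by
  induction k with
  | zero => exact hx0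
  | succ n ih => exact hupdate n ▸ hC.add_smul_sub_mem ih (hxbar n) (hγ n)

theorem frankWolfe_isDescentStep {x s x' xstar : X} (hf : ConvexOn ℝ C f)
    (hf' : HasFDerivAt f (f' x) x) (hG : ConvexOn ℝ C G) (hx : x ∈ C) (hs : s ∈ C)
    (hxstar : xstar ∈ C) (hsmin : f' x s + G s ≤ f' x xstar + G xstar)
    (hcurv : ∀ u ∈ Ioc (0 : ℝ) 1,
      f (x + u • (s - x)) ≤ f x + f' x (u • (s - x)) + u ^ σ / σ * Cf)
    (hx' : ∀ u ∈ Ioc (0 : ℝ) 1, f x' + G x' ≤ f (x + u • (s - x)) + G (x + u • (s - x))) :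
    IsDescentStep σ Cf (f x + G x - (f xstar + G xstar)) (f x' + G x' - (f xstar + G xstar)) := by
  intro u hu
  have hGy : G (x + u • (s - x)) ≤ u * G s + (1 - u) * G x := by
    have := hG.2 hs hx hu.1.le (sub_nonneg.2 hu.2) (add_sub_cancel u 1)
    rwa [show u • s + (1 - u) • x = x + u • (s - x) by module] at this
  have hgrad : f x + f' x (xstar - x) ≤ f xstar :=
    hf.add_apply_sub_le_of_hasFDerivAt hx hxstar hf'
  have hlin : f' x (s - x) + G s ≤ f xstar - f x + G xstar := by
    simp only [map_sub] at hgrad ⊢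
    linarith
  have hfy := hcurv u hu
  rw [map_smul, smul_eq_mul] at hfy
  linarith [hx' u hu, mul_le_mul_of_nonneg_left hlin hu.1.le]

theorem frankWolfe_lineMin_rate (hσ1 : 1 < σ) (hσ2 : σ ≤ 2) (hCf : 0 < Cf)
    (hf : ConvexOn ℝ C f) (hf' : ∀ x ∈ C, HasFDerivAt f (f' x) x) (hG : ConvexOn ℝ C G)
    (hcurv : ∀ x ∈ C, ∀ s ∈ C, ∀ γ ∈ Ioc (0 : ℝ) 1,
      f (x + γ • (s - x)) ≤ f x + f' x (γ • (s - x)) + γ ^ σ / σ * Cf)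
    {xstar : X} (hxstar : xstar ∈ C) (hxstarmin : ∀ y ∈ C, f xstar + G xstar ≤ f y + G y)
    {x xbar : ℕ → X} {γ : ℕ → ℝ} (hx0 : x 0 ∈ C) (hxbar : ∀ k, xbar k ∈ C)
    (hxbarmin : ∀ k, ∀ y ∈ C, f' (x k) (xbar k) + G (xbar k) ≤ f' (x k) y + G y)
    (hγ : ∀ k, γ k ∈ Icc (0 : ℝ) 1) (hupdate : ∀ k, x (k + 1) = x k + γ k • (xbar k - x k))
    (hlinemin : ∀ k, ∀ γ' ∈ Icc (0 : ℝ) 1, f (x (k + 1)) + G (x (k + 1)) ≤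
      f (x k + γ' • (xbar k - x k)) + G (x k + γ' • (xbar k - x k))) (k : ℕ) :
    f (x k) + G (x k) - (f xstar + G xstar) ≤
      (f (x 0) + G (x 0) - (f xstar + G xstar)) /
        (1 + 1 / σ * (f (x 0) + G (x 0) - (f xstar + G xstar)) ^ (1 / (σ - 1)) *
          Cf ^ (1 / (1 - σ)) * k) ^ (σ - 1) := by
  have hxC := hG.1.frankWolfe_mem hx0 hxbar hγ hupdate
  refine le_div_rpow_of_isDescentStep (θ := fun k => f (x k) + G (x k) - (f xstar + G xstar))
    hσ1 hσ2 hCf (sub_nonneg.2 (hxstarmin _ hx0)) (antitone_nat_of_succ_le fun k => ?_)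
    (fun k => ?_) k
  · simpa using hlinemin k 0 (left_mem_Icc.2 zero_le_one)
  · exact frankWolfe_isDescentStep hf (hf' _ (hxC k)) hG (hxC k) (hxbar k) hxstar
      (hxbarmin k xstar hxstar) (hcurv _ (hxC k) _ (hxbar k))
      (fun u hu => hlinemin k u (Ioc_subset_Icc_self hu))

end FrankWolfe

theorem stmt_18_general
    {X : Type*} [NormedAddCommGroup X] [NormedSpace ℝ X]
    (C : Set X) (hCcv : Convex ℝ C)
    (f : X → ℝ) (f' : X → X →L[ℝ] ℝ)
    (hfconv : ConvexOn ℝ Set.univ f)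
    (hfderiv : ∀ x : X, HasFDerivAt f (f' x) x)
    (σ : ℝ) (hσ : σ ∈ Set.Ioc (1 : ℝ) 2)
    (Cf : ℝ) (hCf : 0 < Cf)
    (hcurv : ∀ x ∈ C, ∀ s ∈ C, ∀ γ ∈ Set.Ioc (0 : ℝ) 1,
      f (x + γ • (s - x)) ≤ f x + f' x (γ • (s - x)) + γ ^ σ / σ * Cf)
    (g : X → EReal)
    (hgnebot : ∀ z : X, g z ≠ ⊥)
    (hgconv : ∀ z w : X, ∀ lam : ℝ, 0 < lam → lam < 1 →
      g (lam • z + (1 - lam) • w) ≤ (lam : EReal) * g z + ((1 - lam : ℝ) : EReal) * g w)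
    (hgC : ∀ z ∈ C, g z ≠ ⊤)
    (xstar : X) (hxstarC : xstar ∈ C)
    (hxstarmin : ∀ y ∈ C, (f xstar : EReal) + g xstar ≤ (f y : EReal) + g y)
    (x xbar : ℕ → X) (γ : ℕ → ℝ)
    (hx0 : x 0 ∈ C)
    (hxbarC : ∀ k, xbar k ∈ C)
    (hxbarmin : ∀ k, ∀ y ∈ C,
      (f' (x k) (xbar k) : EReal) + g (xbar k) ≤ (f' (x k) y : EReal) + g y)
    (hγ : ∀ k, γ k ∈ Set.Icc (0 : ℝ) 1)
    (hupdate : ∀ k, x (k + 1) = x k + γ k • (xbar k - x k))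
    (hlinemin : ∀ k, ∀ γ' ∈ Set.Icc (0 : ℝ) 1,
      (f (x k + γ k • (xbar k - x k)) : EReal) + g (x k + γ k • (xbar k - x k)) ≤
        (f (x k + γ' • (xbar k - x k)) : EReal) + g (x k + γ' • (xbar k - x k))) :
    ∀ k : ℕ, 1 ≤ k →
      (f (x k) + (g (x k)).toReal) - (f xstar + (g xstar).toReal) ≤
        ((f (x 0) + (g (x 0)).toReal) - (f xstar + (g xstar).toReal)) /
          (1 + 1 / σ *
              ((f (x 0) + (g (x 0)).toReal) - (f xstar + (g xstar).toReal))
                ^ (1 / (σ - 1)) * Cf ^ (1 / (1 - σ)) * k) ^ (σ - 1) := by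
  have hle_toReal : ∀ a b : ℝ, ∀ z ∈ C, ∀ w ∈ C,
      (a : EReal) + g z ≤ b + g w → a + (g z).toReal ≤ b + (g w).toReal := by
    intro a b z hz w hw h
    rwa [← EReal.coe_toReal (hgC z hz) (hgnebot z), ← EReal.coe_toReal (hgC w hw) (hgnebot w),
      ← EReal.coe_add, ← EReal.coe_add, EReal.coe_le_coe_iff] at h
  have hG : ConvexOn ℝ C fun z => (g z).toReal := by
    refine convexOn_iff_forall_pos.2 ⟨hCcv, fun z hz w hw a b ha hb hab => ?_⟩
    obtain rfl : b = 1 - a := by linarith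
    have h := hgconv z w a ha (by linarith)
    rw [← EReal.coe_toReal (hgC z hz) (hgnebot z), ← EReal.coe_toReal (hgC w hw) (hgnebot w),
      ← EReal.coe_mul, ← EReal.coe_mul, ← EReal.coe_add,
      ← EReal.coe_toReal (hgC _ (hCcv hz hw ha.le hb.le hab)) (hgnebot _),
      EReal.coe_le_coe_iff] at h
    simpa using h
  have hxC := hCcv.frankWolfe_mem hx0 hxbarC hγ hupdate
  intro k _
  refine frankWolfe_lineMin_rate hσ.1 hσ.2 hCf (hfconv.subset (subset_univ C) hCcv)
    (fun x _ => hfderiv x) hG hcurv hxstarC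
    (fun y hy => hle_toReal _ _ _ hxstarC _ hy (hxstarmin y hy)) hx0 hxbarC
    (fun k y hy => hle_toReal _ _ _ (hxbarC k) _ hy (hxbarmin k y hy)) hγ hupdate
    (fun k γ' hγ' => ?_) k
  have hmem := hCcv.add_smul_sub_mem (hxC k) (hxbarC k) hγ'
  rw [hupdate k]
  exact hle_toReal _ _ _ (hupdate k ▸ hxC (k + 1)) _ hmem (hlinemin k γ' hγ')

/-- **Rate of convergence of the generalized Frank–Wolfe algorithm with line
minimization** (Theorem 5.4). For the composite objective `φ = f + g`, if `f'` is
uniformly continuous on `C`, `Cf > 0` is a curvature constant of order `σ ∈ (1,2]` of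
`f` over `C`, and the stepsizes are chosen by line minimization for `φ`, then for all
`k ≥ 1`, `φ(x_k) − φ* ≤ θ₀ / (1 + (1/σ) θ₀^{1/(σ−1)} Cf^{1/(1−σ)} k)^{σ−1}`, where
`θ₀ = φ(x_0) − φ*`; in particular `φ(x_k) − φ* = O(1/k^{σ−1})`. -/
theorem stmt_18
    {X : Type*} [NormedAddCommGroup X] [NormedSpace ℝ X] [CompleteSpace X]
    (C : Set X) (hCne : C.Nonempty) (hCcl : IsClosed C)
    (hCbd : Bornology.IsBounded C) (hCcv : Convex ℝ C)
    (f : X → ℝ) (f' : X → X →L[ℝ] ℝ)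
    (hfconv : ConvexOn ℝ Set.univ f)
    (hfderiv : ∀ x : X, HasFDerivAt f (f' x) x)
    (hfUC : UniformContinuousOn f' C)
    (σ : ℝ) (hσ : σ ∈ Set.Ioc (1 : ℝ) 2)
    (Cf : ℝ) (hCf : 0 < Cf)
    (hcurv : ∀ x ∈ C, ∀ s ∈ C, ∀ γ ∈ Set.Ioc (0 : ℝ) 1,
      f (x + γ • (s - x)) ≤ f x + f' x (γ • (s - x)) + γ ^ σ / σ * Cf)
    (g : X → EReal)
    (hgproper : ∃ z : X, g z ≠ ⊤) (hgnebot : ∀ z : X, g z ≠ ⊥)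
    (hglsc : LowerSemicontinuous g)
    (hgconv : ∀ z w : X, ∀ lam : ℝ, 0 < lam → lam < 1 →
      g (lam • z + (1 - lam) • w) ≤ (lam : EReal) * g z + ((1 - lam : ℝ) : EReal) * g w)
    (hgC : ∀ z ∈ C, g z ≠ ⊤)
    (xstar : X) (hxstarC : xstar ∈ C)
    (hxstarmin : ∀ y ∈ C, (f xstar : EReal) + g xstar ≤ (f y : EReal) + g y)
    (x xbar : ℕ → X) (γ : ℕ → ℝ)
    (hx0 : x 0 ∈ C)
    (hxbarC : ∀ k, xbar k ∈ C)
    (hxbarmin : ∀ k, ∀ y ∈ C,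
      (f' (x k) (xbar k) : EReal) + g (xbar k) ≤ (f' (x k) y : EReal) + g y)
    (hγ : ∀ k, γ k ∈ Set.Icc (0 : ℝ) 1)
    (hupdate : ∀ k, x (k + 1) = x k + γ k • (xbar k - x k))
    (hlinemin : ∀ k, ∀ γ' ∈ Set.Icc (0 : ℝ) 1,
      (f (x k + γ k • (xbar k - x k)) : EReal) + g (x k + γ k • (xbar k - x k)) ≤
        (f (x k + γ' • (xbar k - x k)) : EReal) + g (x k + γ' • (xbar k - x k))) :
    ∀ k : ℕ, 1 ≤ k →
      (f (x k) + (g (x k)).toReal) - (f xstar + (g xstar).toReal) ≤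
        ((f (x 0) + (g (x 0)).toReal) - (f xstar + (g xstar).toReal)) /
          (1 + 1 / σ *
              ((f (x 0) + (g (x 0)).toReal) - (f xstar + (g xstar).toReal))
                ^ (1 / (σ - 1)) * Cf ^ (1 / (1 - σ)) * k) ^ (σ - 1) :=
  stmt_18_general C hCcv f f' hfconv hfderiv σ hσ Cf hCf hcurv g hgnebot hgconv hgC xstar hxstarC
    hxstarmin x xbar γ hx0 hxbarC hxbarmin hγ hupdate hlinemin
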